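/- For all integers n ≥ 0 and 0 ≤ j ≤ n, the number of noncrossing contractions with exactly j edges of the word (a a†)^n satisfies (n+1) · #{noncrossing contractions of (a a†)^n with j edges} = C(n+1, j+1) · C(n+1, j); that is, this number is the Narayana number (1/(n+1))·C(n+1, j+1)·C(n+1, j), where C denotes the binomial coefficient. -/

import Mathlib

/-- Two edges `(i,j)` and `(p,q)` cross if `i < p < j < q` or `p < i < q < j`. -/
def Crosses {N : ℕ} (e f : Fin N × Fin N) : Prop :=
  (e.1 < f.1 ∧ f.1 < e.2 ∧ e.2 < f.2) ∨ (f.1 < e.1 ∧ e.1 < f.2 ∧ f.2 < e.2)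

/-- A contraction of the word `w`: a set of edges `(i,j)` with `i < j`, `w i = false` (an `a`),
`w j = true` (an `a†`), whose endpoints are pairwise distinct. -/
def IsContraction {N : ℕ} (w : Fin N → Bool) (E : Finset (Fin N × Fin N)) : Prop :=
  (∀ e ∈ E, e.1 < e.2 ∧ w e.1 = false ∧ w e.2 = true) ∧
  (∀ e ∈ E, ∀ f ∈ E, e ≠ f → e.1 ≠ f.1 ∧ e.1 ≠ f.2 ∧ e.2 ≠ f.1 ∧ e.2 ≠ f.2)

/-- A set of edges is noncrossing if no two of its edges cross. -/
def IsNoncrossing {N : ℕ} (E : Finset (Fin N × Fin N)) : Prop :=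
  ∀ e ∈ E, ∀ f ∈ E, ¬ Crosses e f

/-- The number of noncrossing contractions of `w` with exactly `m` edges. -/
noncomputable def ncCount {N : ℕ} (w : Fin N → Bool) (m : ℕ) : ℕ :=
  Nat.card {E : Finset (Fin N × Fin N) //
    IsContraction w E ∧ IsNoncrossing E ∧ E.card = m}

/-- The word `(a^r a†)^n`, of length `(r+1)n`: `n` blocks, each consisting of `r` copies of `a`
(`false`) followed by one `a†` (`true`). -/
def wordRA (r n : ℕ) : Fin ((r + 1) * n) → Bool := fun i => decide (i.val % (r + 1) = r)

/-!
The blocks of the `a`-endpoints and of the `a†`-endpoints of a contraction of `(a a†)^n` form a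
pair `(S, T)` of `j`-subsets of `{0, …, n - 1}` in which `T` never gets ahead of `S`: a ballot
condition. For noncrossing contractions this is a bijection onto the ballot pairs. A noncrossing
contraction is determined by its endpoints, since an `a`-endpoint lying under an edge is matched
under it, so induction on the right endpoint applies; and a ballot pair is realised by matching the
first `a†` with the last `a` before it and recursing. André's reflection, exchanging the tails of
`S` and `T` after the first point where `T` gets ahead, matches the pairs violating the condition
with all pairs of sizes `(j - 1, j + 1)`. The count is therefore
`C(n, j)² - C(n, j - 1) C(n, j + 1)`, the Narayana number.
-/

open Finset

section

variable {N : ℕ} {w : Fin N → Bool} {E E' : Finset (Fin N × Fin N)} {e : Fin N × Fin N}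

lemma IsContraction.injOn_fst (hE : IsContraction w E) :
    Set.InjOn Prod.fst (E : Set (Fin N × Fin N)) :=
  fun e he f hf h => by_contra fun hne => (hE.2 e he f hf hne).1 h

lemma IsContraction.injOn_snd (hE : IsContraction w E) :
    Set.InjOn Prod.snd (E : Set (Fin N × Fin N)) :=
  fun e he f hf h => by_contra fun hne => (hE.2 e he f hf hne).2.2.2 h

lemma IsNoncrossing.exists_nested (hE : IsContraction w E) (hnc : IsNoncrossing E) (he : e ∈ E)
    {i : Fin N} (hi : i ∈ E.image Prod.fst) (h1 : e.1 < i) (h2 : i < e.2) :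
    ∃ f ∈ E, f.1 = i ∧ f.2 < e.2 := by
  obtain ⟨f, hf, rfl⟩ := mem_image.mp hi
  refine ⟨f, hf, rfl, ?_⟩
  have hne : e.2 ≠ f.2 := (hE.2 e he f hf (by rintro rfl; exact h1.false)).2.2.2
  exact (lt_or_gt_of_ne hne).resolve_left fun h3 => hnc e he f hf (Or.inl ⟨h1, h2, h3⟩)

lemma IsNoncrossing.mem_of_image_eq (hE : IsContraction w E) (hnc : IsNoncrossing E)
    (hE' : IsContraction w E') (hnc' : IsNoncrossing E')
    (h1 : E.image Prod.fst = E'.image Prod.fst) (h2 : E.image Prod.snd = E'.image Prod.snd)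
    (ih : ∀ f, f.2 < e.2 → (f ∈ E ↔ f ∈ E')) (he : e ∈ E) : e ∈ E' := by
  obtain ⟨e', he', he'2⟩ := mem_image.mp (h2 ▸ mem_image_of_mem Prod.snd he)
  rcases lt_trichotomy e.1 e'.1 with hlt | heq | hgt
  · obtain ⟨f, hf, hf1, hf2⟩ := hnc.exists_nested hE he
      (h1 ▸ mem_image_of_mem Prod.fst he') hlt (he'2 ▸ (hE'.1 e' he').1)
    have hfe' : f = e' := hE'.injOn_fst ((ih f hf2).mp hf) he' hf1
    rw [hfe', he'2] at hf2
    exact (lt_irrefl _ hf2).elim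
  · rwa [Prod.ext heq he'2.symm]
  · obtain ⟨f, hf, hf1, hf2⟩ := hnc'.exists_nested hE' he'
      (h1 ▸ mem_image_of_mem Prod.fst he) hgt (he'2 ▸ (hE.1 e he).1)
    have hfe : f = e := hE.injOn_fst ((ih f (he'2 ▸ hf2)).mpr hf) he hf1
    rw [hfe, he'2] at hf2
    exact (lt_irrefl _ hf2).elim

theorem IsNoncrossing.eq_of_image_eq (hE : IsContraction w E) (hnc : IsNoncrossing E)
    (hE' : IsContraction w E') (hnc' : IsNoncrossing E')
    (h1 : E.image Prod.fst = E'.image Prod.fst) (h2 : E.image Prod.snd = E'.image Prod.snd) :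
    E = E' := by
  suffices ∀ r : Fin N, ∀ e : Fin N × Fin N, e.2 = r → (e ∈ E ↔ e ∈ E') from
    ext fun e => this e.2 e rfl
  intro r
  induction r using WellFoundedLT.induction with
  | _ r ih =>
    rintro e rfl
    have ih' : ∀ f : Fin N × Fin N, f.2 < e.2 → (f ∈ E ↔ f ∈ E') := fun f hf => ih _ hf f rfl
    exact ⟨hnc.mem_of_image_eq hE hE' hnc' h1 h2 ih',
      hnc'.mem_of_image_eq hE' hE hnc h1.symm h2.symm fun f hf => (ih' f hf).symm⟩

end

section

variable {N : ℕ} {w : Fin N → Bool} {E : Finset (Fin N × Fin N)} {e : Fin N × Fin N}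

lemma IsContraction.insert (hE : IsContraction w E)
    (he : e.1 < e.2 ∧ w e.1 = false ∧ w e.2 = true)
    (hout : ∀ f ∈ E, e.2 < f.2 ∧ (f.1 < e.1 ∨ e.2 < f.1)) : IsContraction w (insert e E) := by
  have hsep : ∀ f ∈ E, e.1 ≠ f.1 ∧ e.1 ≠ f.2 ∧ e.2 ≠ f.1 ∧ e.2 ≠ f.2 := by
    intro f hf
    have := he.1
    obtain ⟨h2, h1 | h1⟩ := hout f hf
    all_goals refine ⟨?_, ?_, ?_, ?_⟩ <;> order
  refine ⟨fun f hf => ?_, fun f hf g hg hfg => ?_⟩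
  · rcases mem_insert.mp hf with rfl | hfE
    exacts [he, hE.1 f hfE]
  · rcases mem_insert.mp hf with rfl | hfE <;> rcases mem_insert.mp hg with rfl | hgE
    · exact absurd rfl hfg
    · exact hsep g hgE
    · obtain ⟨h1, h2, h3, h4⟩ := hsep f hfE
      exact ⟨h1.symm, h3.symm, h2.symm, h4.symm⟩
    · exact hE.2 f hfE g hgE hfg

lemma IsNoncrossing.insert (hnc : IsNoncrossing E) (he : e.1 < e.2)
    (hout : ∀ f ∈ E, e.2 < f.2 ∧ (f.1 < e.1 ∨ e.2 < f.1)) : IsNoncrossing (insert e E) := by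
  have hfree : ∀ f ∈ E, ¬ Crosses e f ∧ ¬ Crosses f e := by
    intro f hf
    obtain ⟨h2, h1 | h1⟩ := hout f hf
    all_goals constructor <;> rintro (⟨_, _, _⟩ | ⟨_, _, _⟩) <;> order
  intro f hf g hg
  rcases mem_insert.mp hf with rfl | hfE <;> rcases mem_insert.mp hg with rfl | hgE
  · rintro (⟨h, -⟩ | ⟨h, -⟩) <;> exact lt_irrefl _ h
  · exact (hfree g hgE).1
  · exact (hfree f hfE).2
  · exact hnc f hfE g hgE

end

def prefixCount (S : Finset ℕ) (k : ℕ) : ℕ := #{x ∈ S | x ≤ k}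

def Dominates (S T : Finset ℕ) : Prop := ∀ k, prefixCount T k ≤ prefixCount S k

lemma prefixCount_erase_of_le {S : Finset ℕ} {p k : ℕ} (hp : p ∈ S) (hpk : p ≤ k) :
    prefixCount (S.erase p) k = prefixCount S k - 1 := by
  rw [prefixCount, filter_erase, card_erase_of_mem (mem_filter.mpr ⟨hp, hpk⟩), prefixCount]

lemma prefixCount_pos {S : Finset ℕ} {p k : ℕ} (hp : p ∈ S) (hpk : p ≤ k) :
    0 < prefixCount S k :=
  card_pos.mpr ⟨p, mem_filter.mpr ⟨hp, hpk⟩⟩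

lemma prefixCount_eq_zero {S : Finset ℕ} {k : ℕ} (h : ∀ x ∈ S, k < x) : prefixCount S k = 0 :=
  card_eq_zero.mpr <| filter_eq_empty_iff.mpr fun x hx => not_le.mpr (h x hx)

lemma Dominates.erase {S T : Finset ℕ} (h : Dominates S T) {p q : ℕ} (hp : p ∈ S) (hq : q ∈ T)
    (hpq : p ≤ q) (hmin : ∀ t ∈ T, q ≤ t) : Dominates (S.erase p) (T.erase q) := by
  intro k
  rcases lt_or_ge k q with hk | hk
  · rw [prefixCount_eq_zero fun t ht => hk.trans_le (hmin t (mem_of_mem_erase ht))]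
    exact Nat.zero_le _
  · rw [prefixCount_erase_of_le hp (hpq.trans hk), prefixCount_erase_of_le hq hk]
    exact Nat.sub_le_sub_right (h k) 1

def leftBlocks {N : ℕ} (E : Finset (Fin N × Fin N)) : Finset ℕ := E.image fun e => e.1.val / 2

def rightBlocks {N : ℕ} (E : Finset (Fin N × Fin N)) : Finset ℕ := E.image fun e => e.2.val / 2

section Word

variable {n : ℕ} {E E' : Finset (Fin ((1 + 1) * n) × Fin ((1 + 1) * n))}

lemma wordRA_one_apply (i : Fin ((1 + 1) * n)) : wordRA 1 n i = decide (i.val % 2 = 1) := rfl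

lemma IsContraction.parity (hE : IsContraction (wordRA 1 n) E)
    {e : Fin ((1 + 1) * n) × Fin ((1 + 1) * n)} (he : e ∈ E) :
    e.1.val % 2 = 0 ∧ e.2.val % 2 = 1 := by
  obtain ⟨-, h1, h2⟩ := hE.1 e he
  simp only [wordRA_one_apply, decide_eq_false_iff_not, decide_eq_true_eq] at h1 h2
  omega

lemma IsContraction.injOn_leftBlock (hE : IsContraction (wordRA 1 n) E) :
    Set.InjOn (fun e : Fin ((1 + 1) * n) × Fin ((1 + 1) * n) => e.1.val / 2) E :=
  fun e he f hf h => hE.injOn_fst he hf <| Fin.ext <| by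
    have := (hE.parity he).1; have := (hE.parity hf).1; simp only at h; omega

lemma IsContraction.injOn_rightBlock (hE : IsContraction (wordRA 1 n) E) :
    Set.InjOn (fun e : Fin ((1 + 1) * n) × Fin ((1 + 1) * n) => e.2.val / 2) E :=
  fun e he f hf h => hE.injOn_snd he hf <| Fin.ext <| by
    have := (hE.parity he).2; have := (hE.parity hf).2; simp only at h; omega

lemma IsContraction.card_leftBlocks (hE : IsContraction (wordRA 1 n) E) :
    #(leftBlocks E) = #E :=
  card_image_of_injOn hE.injOn_leftBlock

lemma IsContraction.card_rightBlocks (hE : IsContraction (wordRA 1 n) E) :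
    #(rightBlocks E) = #E :=
  card_image_of_injOn hE.injOn_rightBlock

lemma leftBlocks_subset_range : leftBlocks E ⊆ range n := by
  simp only [leftBlocks, image_subset_iff, mem_range]
  intro e _
  omega

lemma rightBlocks_subset_range : rightBlocks E ⊆ range n := by
  simp only [rightBlocks, image_subset_iff, mem_range]
  intro e _
  omega

lemma IsContraction.mem_image_fst_iff (hE : IsContraction (wordRA 1 n) E)
    (i : Fin ((1 + 1) * n)) :
    i ∈ E.image Prod.fst ↔ i.val % 2 = 0 ∧ i.val / 2 ∈ leftBlocks E := by
  simp only [leftBlocks, mem_image]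
  constructor
  · rintro ⟨e, he, rfl⟩
    exact ⟨(hE.parity he).1, e, he, rfl⟩
  · rintro ⟨hi, e, he, h⟩
    refine ⟨e, he, Fin.ext ?_⟩
    have := (hE.parity he).1
    omega

lemma IsContraction.mem_image_snd_iff (hE : IsContraction (wordRA 1 n) E)
    (i : Fin ((1 + 1) * n)) :
    i ∈ E.image Prod.snd ↔ i.val % 2 = 1 ∧ i.val / 2 ∈ rightBlocks E := by
  simp only [rightBlocks, mem_image]
  constructor
  · rintro ⟨e, he, rfl⟩
    exact ⟨(hE.parity he).2, e, he, rfl⟩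
  · rintro ⟨hi, e, he, h⟩
    refine ⟨e, he, Fin.ext ?_⟩
    have := (hE.parity he).2
    omega

theorem IsNoncrossing.eq_of_blocks_eq (hE : IsContraction (wordRA 1 n) E)
    (hnc : IsNoncrossing E)
    (hE' : IsContraction (wordRA 1 n) E') (hnc' : IsNoncrossing E')
    (hl : leftBlocks E = leftBlocks E') (hr : rightBlocks E = rightBlocks E') : E = E' :=
  hnc.eq_of_image_eq hE hE' hnc'
    (ext fun i => by rw [hE.mem_image_fst_iff, hE'.mem_image_fst_iff, hl])
    (ext fun i => by rw [hE.mem_image_snd_iff, hE'.mem_image_snd_iff, hr])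

lemma IsContraction.dominates_blocks (hE : IsContraction (wordRA 1 n) E) :
    Dominates (leftBlocks E) (rightBlocks E) := by
  intro k
  simp only [prefixCount, leftBlocks, rightBlocks, filter_image]
  rw [card_image_of_injOn (hE.injOn_rightBlock.mono (filter_subset _ _)),
    card_image_of_injOn (hE.injOn_leftBlock.mono (filter_subset _ _))]
  refine card_le_card fun e he => ?_
  simp only [mem_filter] at he ⊢
  have := Fin.lt_def.mp (hE.1 e he.1).1
  exact ⟨he.1, by omega⟩

end Word

theorem exists_isNoncrossing_blocks_eq {n : ℕ} {S T : Finset ℕ} (hS : S ⊆ range n)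
    (hT : T ⊆ range n) (hcard : #S = #T) (hdom : Dominates S T) :
    ∃ E : Finset (Fin ((1 + 1) * n) × Fin ((1 + 1) * n)), IsContraction (wordRA 1 n) E ∧
      IsNoncrossing E ∧ leftBlocks E = S ∧ rightBlocks E = T := by
  induction hm : #T generalizing S T with
  | zero =>
    rw [card_eq_zero.mp hm, card_eq_zero.mp (hcard.trans hm)]
    exact ⟨∅, ⟨by simp, by simp⟩, by simp [IsNoncrossing], rfl, rfl⟩
  | succ m ih =>
    obtain ⟨q, hqT, hqmin⟩ : ∃ q ∈ T, ∀ t ∈ T, q ≤ t :=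
      ⟨T.min' (card_pos.mp (by omega)), min'_mem _ _, fun t ht => min'_le _ _ ht⟩
    have hne : ({s ∈ S | s ≤ q}).Nonempty :=
      card_pos.mp ((prefixCount_pos hqT le_rfl).trans_le (hdom q))
    obtain ⟨p, hp, hpmax⟩ : ∃ p ∈ {s ∈ S | s ≤ q}, ∀ s ∈ {s ∈ S | s ≤ q}, s ≤ p :=
      ⟨_, max'_mem _ hne, fun s hs => le_max' _ s hs⟩
    obtain ⟨hpS, hpq⟩ := mem_filter.mp hp
    obtain ⟨E', hE', hnc', hl, hr⟩ :=
      ih ((erase_subset _ _).trans hS) ((erase_subset _ _).trans hT)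
      (by rw [card_erase_of_mem hpS, card_erase_of_mem hqT, hcard])
      (hdom.erase hpS hqT hpq hqmin) (by rw [card_erase_of_mem hqT, hm]; rfl)
    have hqn := mem_range.mp (hT hqT)
    let e₀ : Fin ((1 + 1) * n) × Fin ((1 + 1) * n) :=
      (⟨2 * p, by omega⟩, ⟨2 * q + 1, by omega⟩)
    have hout : ∀ f ∈ E', e₀.2 < f.2 ∧ (f.1 < e₀.1 ∨ e₀.2 < f.1) := by
      intro f hf
      obtain ⟨hf1p, hf1⟩ :=
        mem_erase.mp (hl ▸ mem_image_of_mem _ hf : f.1.val / 2 ∈ S.erase p)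
      obtain ⟨hf2q, hf2⟩ :=
        mem_erase.mp (hr ▸ mem_image_of_mem _ hf : f.2.val / 2 ∈ T.erase q)
      have := hqmin _ hf2
      have := hE'.parity hf
      simp only [Fin.lt_def, e₀]
      by_cases h : f.1.val / 2 ≤ q
      · have := hpmax _ (mem_filter.mpr ⟨hf1, h⟩)
        omega
      · omega
    refine ⟨insert e₀ E', hE'.insert ⟨?_, ?_, ?_⟩ hout, hnc'.insert ?_ hout, ?_, ?_⟩
    · simp only [Fin.lt_def, e₀]; omega
    · simp [wordRA_one_apply, e₀]
    · simp [wordRA_one_apply, e₀]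
    · simp only [Fin.lt_def, e₀]; omega
    · rw [leftBlocks, image_insert, ← leftBlocks, hl]
      rw [show 2 * p / 2 = p by omega]
      exact insert_erase hpS
    · rw [rightBlocks, image_insert, ← rightBlocks, hr]
      rw [show (2 * q + 1) / 2 = q by omega]
      exact insert_erase hqT

def subsetPairs (n a b : ℕ) : Finset (Finset ℕ × Finset ℕ) :=
  (range n).powersetCard a ×ˢ (range n).powersetCard b

lemma mem_subsetPairs {n a b : ℕ} {p : Finset ℕ × Finset ℕ} :
    p ∈ subsetPairs n a b ↔ (p.1 ⊆ range n ∧ #p.1 = a) ∧ p.2 ⊆ range n ∧ #p.2 = b := by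
  simp only [subsetPairs, mem_product, mem_powersetCard]

open scoped Classical in
theorem ncCount_wordRA_one (n j : ℕ) :
    ncCount (wordRA 1 n) j = #{p ∈ subsetPairs n j j | Dominates p.1 p.2} := by
  rw [ncCount, Nat.card_eq_fintype_card, Fintype.card_subtype]
  refine card_bij (fun E _ => (leftBlocks E, rightBlocks E)) ?_ ?_ ?_
  · intro E hmem
    obtain ⟨hE, -, rfl⟩ := (mem_filter.mp hmem).2
    exact mem_filter.mpr ⟨mem_subsetPairs.mpr ⟨⟨leftBlocks_subset_range, hE.card_leftBlocks⟩,
      rightBlocks_subset_range, hE.card_rightBlocks⟩, hE.dominates_blocks⟩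
  · intro E hmem E' hmem' h
    obtain ⟨hE, hnc, -⟩ := (mem_filter.mp hmem).2
    obtain ⟨hE', hnc', -⟩ := (mem_filter.mp hmem').2
    exact hnc.eq_of_blocks_eq hE hE' hnc' (congrArg Prod.fst h) (congrArg Prod.snd h)
  · rintro ⟨S, T⟩ h
    obtain ⟨⟨⟨hS, hSc⟩, hT, hTc⟩, hdom⟩ := And.imp_left mem_subsetPairs.mp (mem_filter.mp h)
    obtain ⟨E, hE, hnc, rfl, rfl⟩ :=
      exists_isNoncrossing_blocks_eq hS hT (hSc.trans hTc.symm) hdom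
    exact ⟨E, mem_filter.mpr ⟨mem_univ _, hE, hnc, hE.card_leftBlocks ▸ hSc⟩, rfl⟩

lemma card_subsetPairs (n a b : ℕ) : #(subsetPairs n a b) = n.choose a * n.choose b := by
  rw [subsetPairs, card_product, card_powersetCard, card_powersetCard, card_range]

section Reflection

variable {S T : Finset ℕ} {p : Finset ℕ × Finset ℕ}

lemma prefixCount_mono (S : Finset ℕ) {k l : ℕ} (h : k ≤ l) :
    prefixCount S k ≤ prefixCount S l :=
  card_le_card <| monotone_filter_right S fun _ _ hx => hx.trans h

lemma prefixCount_succ_le (S : Finset ℕ) (k : ℕ) :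
    prefixCount S (k + 1) ≤ prefixCount S k + 1 := by
  calc prefixCount S (k + 1) ≤ #(insert (k + 1) {x ∈ S | x ≤ k}) := by
        refine card_le_card fun x hx => ?_
        simp only [mem_filter, mem_insert] at hx ⊢
        exact (Nat.le_succ_iff.mp hx.2).elim (fun h => Or.inr ⟨hx.1, h⟩) Or.inl
    _ ≤ prefixCount S k + 1 := card_insert_le _ _

lemma prefixCount_zero_le_one (S : Finset ℕ) : prefixCount S 0 ≤ 1 :=
  card_le_one.mpr fun x hx y hy => by
    simp only [mem_filter, nonpos_iff_eq_zero] at hx hy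
    rw [hx.2, hy.2]

lemma prefixCount_eq_card {n : ℕ} (hS : S ⊆ range n) : prefixCount S n = #S :=
  congrArg card <| filter_true_of_mem fun _ hx => (mem_range.mp (hS hx)).le

lemma not_dominates_iff : ¬ Dominates S T ↔ ∃ k, prefixCount S k < prefixCount T k := by
  simp [Dominates]

lemma prefixCount_find (h : ∃ k, prefixCount S k < prefixCount T k) :
    prefixCount T (Nat.find h) = prefixCount S (Nat.find h) + 1 := by
  have hlt : prefixCount S (Nat.find h) < prefixCount T (Nat.find h) := Nat.find_spec h
  have hmin (k : ℕ) (hk : k < Nat.find h) := Nat.find_min h hk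
  generalize Nat.find h = m at hlt hmin ⊢
  cases m with
  | zero =>
    have := prefixCount_zero_le_one T
    omega
  | succ k =>
    have := hmin k k.lt_succ_self
    have := prefixCount_succ_le T k
    have := prefixCount_mono S (Nat.le_add_right k 1)
    omega

def swapAfter (m : ℕ) (p : Finset ℕ × Finset ℕ) : Finset ℕ × Finset ℕ :=
  ({x ∈ p.1 | x ≤ m} ∪ {x ∈ p.2 | m < x}, {x ∈ p.2 | x ≤ m} ∪ {x ∈ p.1 | m < x})

lemma swapAfter_swapAfter (m : ℕ) (p : Finset ℕ × Finset ℕ) :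
    swapAfter m (swapAfter m p) = p := by
  ext x <;> simp only [swapAfter, mem_union, mem_filter] <;> by_cases x ≤ m <;> grind

lemma prefixCount_swapAfter {m k : ℕ} (hk : k ≤ m) :
    prefixCount (swapAfter m p).1 k = prefixCount p.1 k ∧
      prefixCount (swapAfter m p).2 k = prefixCount p.2 k := by
  constructor <;>
  · refine congrArg card (ext fun x => ?_)
    simp only [swapAfter, mem_union, mem_filter]
    grind

lemma card_swapAfter (m : ℕ) (p : Finset ℕ × Finset ℕ) :
    #(swapAfter m p).1 + prefixCount p.2 m = prefixCount p.1 m + #p.2 ∧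
      #(swapAfter m p).2 + prefixCount p.1 m = prefixCount p.2 m + #p.1 := by
  have hdisj (A B : Finset ℕ) : Disjoint {x ∈ A | x ≤ m} {x ∈ B | m < x} :=
    disjoint_left.mpr fun _ h₁ h₂ => (mem_filter.mp h₁).2.not_gt (mem_filter.mp h₂).2
  have hsplit (A : Finset ℕ) : #{x ∈ A | x ≤ m} + #{x ∈ A | m < x} = #A := by
    simpa only [not_le] using card_filter_add_card_filter_not (s := A) (· ≤ m)
  simp only [swapAfter, prefixCount, card_union_of_disjoint (hdisj _ _)]
  have := hsplit p.1
  have := hsplit p.2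
  constructor <;> omega

lemma swapAfter_subset {n : ℕ} (hp₁ : p.1 ⊆ range n) (hp₂ : p.2 ⊆ range n) (m : ℕ) :
    (swapAfter m p).1 ⊆ range n ∧ (swapAfter m p).2 ⊆ range n :=
  ⟨union_subset ((filter_subset _ _).trans hp₁) ((filter_subset _ _).trans hp₂),
    union_subset ((filter_subset _ _).trans hp₂) ((filter_subset _ _).trans hp₁)⟩

open scoped Classical in
noncomputable def reflect (p : Finset ℕ × Finset ℕ) : Finset ℕ × Finset ℕ :=
  if h : ∃ k, prefixCount p.1 k < prefixCount p.2 k then swapAfter (Nat.find h) p else p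

lemma reflect_eq (h : ∃ k, prefixCount p.1 k < prefixCount p.2 k) :
    reflect p = swapAfter (Nat.find h) p :=
  dif_pos h

lemma exists_find_reflect (h : ∃ k, prefixCount p.1 k < prefixCount p.2 k) :
    ∃ h' : ∃ k, prefixCount (reflect p).1 k < prefixCount (reflect p).2 k,
      Nat.find h' = Nat.find h := by
  have hsame {k : ℕ} (hk : k ≤ Nat.find h) :
      prefixCount (reflect p).1 k < prefixCount (reflect p).2 k ↔
        prefixCount p.1 k < prefixCount p.2 k := by
    rw [reflect_eq h, (prefixCount_swapAfter hk).1, (prefixCount_swapAfter hk).2]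
  have h' : ∃ k, prefixCount (reflect p).1 k < prefixCount (reflect p).2 k :=
    ⟨_, (hsame le_rfl).mpr (Nat.find_spec h)⟩
  refine ⟨h', (Nat.find_eq_iff h').mpr ⟨(hsame le_rfl).mpr (Nat.find_spec h), fun k hk => ?_⟩⟩
  rw [hsame hk.le]
  exact Nat.find_min h hk

lemma reflect_reflect (h : ∃ k, prefixCount p.1 k < prefixCount p.2 k) :
    reflect (reflect p) = p := by
  obtain ⟨h', hfind⟩ := exists_find_reflect h
  rw [reflect_eq h', hfind, reflect_eq h, swapAfter_swapAfter]

lemma reflect_mem_subsetPairs {n a b : ℕ} (h : ∃ k, prefixCount p.1 k < prefixCount p.2 k)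
    (hp : p ∈ subsetPairs n a (b + 1)) : reflect p ∈ subsetPairs n b (a + 1) := by
  obtain ⟨⟨hp₁, ha⟩, hp₂, hb⟩ := mem_subsetPairs.mp hp
  have hfind := prefixCount_find h
  obtain ⟨hc₁, hc₂⟩ := card_swapAfter (Nat.find h) p
  obtain ⟨hs₁, hs₂⟩ := swapAfter_subset hp₁ hp₂ (Nat.find h)
  rw [reflect_eq h]
  exact mem_subsetPairs.mpr ⟨⟨hs₁, by omega⟩, hs₂, by omega⟩

end Reflection

open scoped Classical in
theorem card_filter_not_dominates (n : ℕ) {a b : ℕ} (hba : b ≤ a) :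
    #{p ∈ subsetPairs n a (b + 1) | ¬ Dominates p.1 p.2} = n.choose b * n.choose (a + 1) := by
  have hviol (p) (hp : p ∈ subsetPairs n b (a + 1)) :
      ∃ k, prefixCount p.1 k < prefixCount p.2 k := by
    obtain ⟨⟨hp₁, hb⟩, hp₂, ha⟩ := mem_subsetPairs.mp hp
    exact ⟨n, by rw [prefixCount_eq_card hp₁, prefixCount_eq_card hp₂]; omega⟩
  rw [← card_subsetPairs]
  refine card_nbij' reflect reflect (fun p hp => ?_) (fun p hp => ?_) (fun p hp => ?_)
    (fun p hp => reflect_reflect (hviol p hp))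
  · obtain ⟨hp, hnd⟩ := mem_filter.mp hp
    exact reflect_mem_subsetPairs (not_dominates_iff.mp hnd) hp
  · refine mem_filter.mpr ⟨reflect_mem_subsetPairs (hviol p hp) hp, ?_⟩
    exact not_dominates_iff.mpr (exists_find_reflect (hviol p hp)).1
  · exact reflect_reflect (not_dominates_iff.mp (mem_filter.mp hp).2)

open scoped Classical in
theorem card_filter_dominates_add (n j : ℕ) :
    #{p ∈ subsetPairs n (j + 1) (j + 1) | Dominates p.1 p.2} + n.choose j * n.choose (j + 2)
      = n.choose (j + 1) ^ 2 := by
  rw [← card_filter_not_dominates n (Nat.le_succ j), card_filter_add_card_filter_not,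
    card_subsetPairs, sq]

theorem add_one_mul_choose_sq_eq (n k : ℕ) :
    (n + 1) * n.choose (k + 1) ^ 2 = (n + 1).choose (k + 2) * (n + 1).choose (k + 1) +
      (n + 1) * (n.choose k * n.choose (k + 2)) := by
  have h₁ := Nat.add_one_mul_choose_eq n k
  have h₂ := Nat.add_one_mul_choose_eq n (k + 1)
  simp only [Nat.choose_succ_succ] at h₁ h₂ ⊢
  qify at h₁ h₂ ⊢
  set x : ℚ := (n.choose k : ℚ)
  set y : ℚ := (n.choose (k + 1) : ℚ)
  set z : ℚ := (n.choose (k + 2) : ℚ)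
  have hy : y = (n - k) * x / (k + 1) := by field_simp; linarith
  have hz : z = (n - k - 1) * y / (k + 2) := by field_simp; linarith
  rw [hz, hy]
  field_simp
  ring

theorem stmt15_general (n j : ℕ) :
    (n + 1) * ncCount (wordRA 1 n) j
      = Nat.choose (n + 1) (j + 1) * Nat.choose (n + 1) j := by
  classical
  rw [ncCount_wordRA_one]
  cases j with
  | zero => simp [subsetPairs, filter_singleton, Dominates]
  | succ k =>
    apply Nat.add_right_cancel (m := (n + 1) * (n.choose k * n.choose (k + 2)))
    rw [← mul_add, card_filter_dominates_add, add_one_mul_choose_sq_eq]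

theorem stmt15 (n j : ℕ) (hj : j ≤ n) :
    (n + 1) * ncCount (wordRA 1 n) j
      = Nat.choose (n + 1) (j + 1) * Nat.choose (n + 1) j :=
  stmt15_general n j
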